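/- Let R be a PVMD and P a t-prime ideal of R. Then: (1) T(P) ⊊ Ω(P) if and only if T(P) = R_P ∩ Ω(P) and Ω(P) ⊄ R_P; (2) the following are equivalent: (i) (P·Ω(P))_{t₁} = Ω(P), where t₁ is the t-operation of the ring Ω(P); (ii) Ω(P) ⊄ R_P; (iii) P = √I for some t-invertible ideal I of R. -/

import Mathlib

/-!
Common definitions: star operations (`v`- and `t`-closure), `t`-ideals, `t`-invertibility,
PVMDs, overrings, `t`-linked and `t`-flat overrings, localizations inside the quotient
field, Nagata and Kaplansky transforms, endomorphism rings of ideals.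
-/

open scoped Classical

namespace PVMDPaper

noncomputable section

section Generic

variable (A : Type*) [CommRing A] (K : Type*) [Field K] [Algebra A K]

/-- The image of an integral ideal of `A` inside the field `K`, as an `A`-submodule of `K`. -/
def toK (I : Ideal A) : Submodule A K := Submodule.map (Algebra.linearMap A K) I

variable {A K}

/-- The dual `I⁻¹ = (A : I) = {x ∈ K : x I ⊆ A}` of a submodule of `K`. -/
def dual (I : Submodule A K) : Submodule A K := 1 / I

/-- The `v`-closure `I_v = (I⁻¹)⁻¹`. -/
def vOp (I : Submodule A K) : Submodule A K := 1 / (1 / I)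

/-- The `t`-closure `I_t`: the union of `J_v` where `J` ranges over the nonzero finitely
generated submodules `J ≤ I` (the union of this directed family is its supremum). -/
def tOp (I : Submodule A K) : Submodule A K :=
  sSup {V | ∃ J : Submodule A K, J ≠ ⊥ ∧ J.FG ∧ J ≤ I ∧ V = vOp J}

variable (K)

/-- An (integral) ideal `I` of `A` is a `t`-ideal if `I = I_t`. -/
def IsTIdeal (I : Ideal A) : Prop := tOp (toK A K I) = toK A K I

/-- An ideal `I` is `t`-invertible if `(I I⁻¹)_t = A`. -/
def IsTInvertible (I : Ideal A) : Prop := tOp (toK A K I * dual (toK A K I)) = 1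

/-- A `t`-maximal ideal: an ideal maximal in the set of proper integral `t`-ideals. -/
def IsTMaximal (M : Ideal A) : Prop :=
  M ≠ ⊤ ∧ IsTIdeal K M ∧ ∀ J : Ideal A, J ≠ ⊤ → IsTIdeal K J → M ≤ J → J = M

variable (A)

/-- `A` is a Prüfer `v`-multiplication domain: every nonzero finitely generated ideal
is `t`-invertible. -/
def IsPVMD : Prop := ∀ I : Ideal A, I ≠ ⊥ → I.FG → IsTInvertible K I

/-- `Spec_t(A)` is Noetherian: the ascending chain condition on radical `t`-ideals. -/
def TSpecNoetherian : Prop :=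
  ∀ f : ℕ →o Ideal A, (∀ n, IsTIdeal K (f n) ∧ (f n).radical = f n) →
    ∃ n, ∀ m, n ≤ m → f m = f n

variable {A K}

/-- A submodule of `K` is a subring of `K` iff it contains `1` and is closed under
multiplication (being an additive subgroup already). -/
def IsSubringOf (S : Submodule A K) : Prop :=
  (1 : K) ∈ S ∧ ∀ x ∈ S, ∀ y ∈ S, x * y ∈ S

variable (K)

/-- The localization `A_P = {a/s : a ∈ A, s ∈ A ∖ P}` viewed as a subset of `K`. -/
def loc (P : Ideal A) : Set K :=
  {x | ∃ a s : A, s ∉ P ∧ x * algebraMap A K s = algebraMap A K a}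

/-- The set `J A_P = {a/s : a ∈ J, s ∈ A ∖ P} ⊆ K`. -/
def locIdealAt (J P : Ideal A) : Set K :=
  {x | ∃ a ∈ J, ∃ s : A, s ∉ P ∧ x * algebraMap A K s = algebraMap A K a}

/-- `Z(A, I)`: the set of zero divisors on `A/I`. -/
def ZSet (I : Ideal A) : Set A := {x | ∃ a : A, a ∉ I ∧ x * a ∈ I}

/-- `Q` is a maximal prime ideal of `Z(A,I)`: a prime contained in `Z(A,I)`, maximal
(under inclusion) among the primes contained in `Z(A,I)`. -/
def MaxPrimeOfZ (I Q : Ideal A) : Prop :=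
  Q.IsPrime ∧ (Q : Set A) ⊆ ZSet I ∧
    ∀ Q' : Ideal A, Q'.IsPrime → (Q' : Set A) ⊆ ZSet I → Q ≤ Q' → Q' = Q

end Generic

section Overring

variable {R : Type*} [CommRing R] [IsDomain R]
variable {K : Type*} [Field K] [Algebra R K] [IsFractionRing R K]

/-- The extension `IT` of an ideal `I` of `R` to an overring `T`, as a `T`-submodule of `K`. -/
def extendI (I : Ideal R) (T : Subalgebra R K) : Submodule T K :=
  Submodule.span T (algebraMap R K '' (I : Set R))

/-- The extension `IT` of an `R`-submodule `I` of `K` to an overring `T`. -/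
def extendS (I : Submodule R K) (T : Subalgebra R K) : Submodule T K :=
  Submodule.span T (I : Set K)

/-- An overring `T` of `R` is `t`-linked over `R` if `(IT)⁻¹ = T` for each finitely
generated ideal `I` of `R` with `I⁻¹ = R`. -/
def IsTLinked (T : Subalgebra R K) : Prop :=
  ∀ I : Ideal R, I.FG → dual (toK R K I) = 1 → dual (extendI I T) = 1

/-- An overring `T` of `R` is `t`-flat over `R` if `T_M = R_{M ∩ R}` for each
`t`-maximal ideal `M` of `T`. -/
def IsTFlat (T : Subalgebra R K) : Prop :=
  ∀ M : Ideal T, IsTMaximal K M → loc K M = loc K (M.comap (algebraMap R T))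

variable (R K)

/-- `R` is a `tQR`-domain: a PVMD all of whose `t`-linked overrings are localizations
of `R` at multiplicative sets. -/
def IsTQR : Prop :=
  IsPVMD R K ∧ ∀ T : Subalgebra R K, IsTLinked T → ∃ S : Submonoid R,
    (T : Set K) = {x | ∃ a : R, ∃ s ∈ S, x * algebraMap R K s = algebraMap R K a}

variable {R K}
variable (K)

/-- The endomorphism ring `(I : I) = {x ∈ K : x I ⊆ I}` of an ideal `I`, as an
overring of `R`. -/
def endoRing (I : Ideal R) : Subalgebra R K where
  carrier := {x : K | ∀ y ∈ toK R K I, x * y ∈ toK R K I}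
  mul_mem' := by
    intro a b ha hb y hy
    rw [mul_assoc]
    exact ha _ (hb _ hy)
  one_mem' := by
    intro y hy
    rwa [one_mul]
  add_mem' := by
    intro a b ha hb y hy
    rw [add_mul]
    exact Submodule.add_mem _ (ha y hy) (hb y hy)
  zero_mem' := by
    intro y hy
    rw [zero_mul]
    exact Submodule.zero_mem _
  algebraMap_mem' := by
    intro r y hy
    rw [← Algebra.smul_def]
    exact Submodule.smul_mem _ r hy

set_option synthInstance.maxHeartbeats 400000 in
/-- The ideal `I`, viewed as an ideal of its endomorphism ring `(I : I)`. -/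
def idealInEndo (I : Ideal R) : Ideal (endoRing K I) where
  carrier := {x | (x : K) ∈ toK R K I}
  add_mem' := by
    intro a b ha hb
    simp only [Set.mem_setOf_eq] at *
    rw [AddMemClass.coe_add]
    exact Submodule.add_mem _ ha hb
  zero_mem' := by
    simp only [Set.mem_setOf_eq, ZeroMemClass.coe_zero]
    exact Submodule.zero_mem _
  smul_mem' := by
    intro c x hx
    simp only [Set.mem_setOf_eq] at *
    rw [smul_eq_mul, MulMemClass.coe_mul]
    exact c.2 _ hx

/-- The Kaplansky transform `Ω(I) = {u ∈ K : ∀ a ∈ I, ∃ n ≥ 1, u aⁿ ∈ R}`, as an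
overring of `R`. -/
def kaplansky (I : Ideal R) : Subalgebra R K where
  carrier := {u : K | ∀ a ∈ I, ∃ n : ℕ, 0 < n ∧
    ∃ r : R, u * (algebraMap R K a) ^ n = algebraMap R K r}
  mul_mem' := by
    intro u v hu hv a ha
    obtain ⟨n, hn, r, hr⟩ := hu a ha
    obtain ⟨m, hm, s, hs⟩ := hv a ha
    refine ⟨n + m, by omega, r * s, ?_⟩
    rw [map_mul, ← hr, ← hs, pow_add]
    ring
  one_mem' := by
    intro a ha
    exact ⟨1, one_pos, a, by rw [pow_one, one_mul]⟩
  add_mem' := by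
    intro u v hu hv a ha
    obtain ⟨n, hn, r, hr⟩ := hu a ha
    obtain ⟨m, hm, s, hs⟩ := hv a ha
    refine ⟨n + m, by omega, r * a ^ m + s * a ^ n, ?_⟩
    rw [map_add, map_mul, map_mul, map_pow, map_pow, ← hr, ← hs, pow_add, add_mul]
    ring
  zero_mem' := by
    intro a ha
    exact ⟨1, one_pos, 0, by rw [map_zero, zero_mul]⟩
  algebraMap_mem' := by
    intro r a ha
    exact ⟨1, one_pos, r * a, by rw [map_mul, pow_one]⟩

/-- The Nagata (ideal) transform `T(I) = ⋃_{n ≥ 1} (R : Iⁿ)`, as an overring of `R`. -/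
def nagata (I : Ideal R) : Subalgebra R K where
  carrier := {x : K | ∃ n : ℕ, ∀ y ∈ I ^ (n + 1),
    ∃ r : R, x * algebraMap R K y = algebraMap R K r}
  mul_mem' := by
    intro x x' hx hx'
    obtain ⟨n, hn⟩ := hx
    obtain ⟨m, hm⟩ := hx'
    refine ⟨n + m + 1, fun y hy => ?_⟩
    rw [show n + m + 1 + 1 = (n + 1) + (m + 1) by omega, pow_add] at hy
    refine Submodule.mul_induction_on hy ?_ ?_
    · intro a ha b hb
      obtain ⟨r, hr⟩ := hn a ha
      obtain ⟨s, hs⟩ := hm b hb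
      refine ⟨r * s, ?_⟩
      rw [map_mul, map_mul, ← hr, ← hs]
      ring
    · rintro y1 y2 ⟨r1, h1⟩ ⟨r2, h2⟩
      exact ⟨r1 + r2, by rw [map_add, map_add, mul_add, h1, h2]⟩
  one_mem' := ⟨0, fun y _ => ⟨y, by rw [one_mul]⟩⟩
  add_mem' := by
    intro x x' hx hx'
    obtain ⟨n, hn⟩ := hx
    obtain ⟨m, hm⟩ := hx'
    refine ⟨n + m + 1, fun y hy => ?_⟩
    have h1 : y ∈ I ^ (n + 1) := Ideal.pow_le_pow_right (by omega) hy
    have h2 : y ∈ I ^ (m + 1) := Ideal.pow_le_pow_right (by omega) hy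
    obtain ⟨r, hr⟩ := hn y h1
    obtain ⟨s, hs⟩ := hm y h2
    exact ⟨r + s, by rw [map_add, add_mul, hr, hs]⟩
  zero_mem' := ⟨0, fun y _ => ⟨0, by rw [map_zero, zero_mul]⟩⟩
  algebraMap_mem' := by
    intro r
    exact ⟨0, fun y _ => ⟨r * y, by rw [map_mul]⟩⟩

end Overring

/-!
Everything is read off the ideal of denominators `D(x) = (R :_R x)`: `x ∈ R_P` iff
`D(x) ⊄ P`, `x ∈ Ω(P)` iff `P ⊆ √D(x)`, and `x ∈ T(P)` iff `Pⁿ ⊆ D(x)` for some `n`. As the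
dual of the fractional ideal `(1, x) = b⁻¹ (b, a)`, where `x = a / b`, the ideal `D(x)` is
divisorial and, `R` being a PVMD, `t`-invertible.

A `t`-invertible ideal `I` is `v`-finite (`I ⊆ J_v` with `J ⊆ I` finitely generated), and
`I I⁻¹` lies in no proper `t`-ideal. The first fact shows `Ω(P) ⊆ T(P)` as soon as some
`u ∈ T(P)` is not in `R_P`: then `D(u) ⊆ P` and a power of `P` lies in `D(u) ⊆ J_v`, while
`J ⊆ √D(w)` for every `w ∈ Ω(P)`. The second, applied to `(s, p)`, makes `s` and `p`
comparable at every `t`-maximal ideal (these are prime), which yields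
`R_P ∩ Ω(P) ⊆ (R : P) ⊆ T(P)`; part (1) follows.

For part (2), `x ∈ Ω(P) ∖ R_P` gives the `t`-invertible ideal `D(x)` with radical `P`.
Conversely, if `I ⊆ P` is `t`-invertible with `I⁻¹ ⊆ Ω(P)`, some `u ∈ I⁻¹` has `uI ⊄ P`, so
`u ∉ R_P`; such an `I` is provided both by `√I = P` and, when `(PΩ(P))_{t₁} = Ω(P)`, by a
finitely generated `Q ⊆ P` with `(QΩ(P))_{v₁} = Ω(P)`. Finally, if `√I = P` with `I`
`t`-invertible, then `I⁻¹ ⊆ Ω(P)`, so a finitely generated `v`-dense `F ⊆ I I⁻¹ ⊆ PΩ(P)` stays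
`v₁`-dense over `Ω(P)`, giving `(PΩ(P))_{t₁} = Ω(P)`.
-/

section StarOperations

variable {A : Type*} [CommRing A] {K : Type*} [Field K] [Algebra A K]

lemma mem_dual_span {s : Set K} {z : K} :
    z ∈ dual (Submodule.span A s) ↔ ∀ y ∈ s, z * y ∈ (1 : Submodule A K) := by
  refine ⟨fun h y hy => h y (Submodule.subset_span hy), fun h y hy => ?_⟩
  induction hy using Submodule.span_induction with
  | mem y hy => exact h y hy
  | zero => simp
  | add a b _ _ ha hb => rw [mul_add]; exact add_mem ha hb
  | smul r a _ ha => rw [mul_smul_comm]; exact Submodule.smul_mem _ r ha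

lemma vOp_eq_dual_dual (X : Submodule A K) : vOp X = dual (dual X) :=
  rfl

lemma dual_antitone {X Y : Submodule A K} (h : X ≤ Y) : dual Y ≤ dual X :=
  fun _ hz y hy => hz y (h hy)

lemma le_vOp (X : Submodule A K) : X ≤ vOp X :=
  fun z hz y hy => by rw [mul_comm]; exact hy z hz

lemma vOp_mono {X Y : Submodule A K} (h : X ≤ Y) : vOp X ≤ vOp Y :=
  dual_antitone (dual_antitone h)

lemma dual_vOp (X : Submodule A K) : dual (vOp X) = dual X :=
  le_antisymm (dual_antitone (le_vOp X)) (le_vOp (dual X))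

lemma vOp_dual (X : Submodule A K) : vOp (dual X) = dual X :=
  dual_vOp X

lemma vOp_idem (X : Submodule A K) : vOp (vOp X) = vOp X :=
  dual_vOp (dual X)

lemma one_mem_vOp_iff {X : Submodule A K} : (1 : K) ∈ vOp X ↔ dual X ≤ 1 :=
  Submodule.one_mem_div

lemma le_dual_iff {X Y : Submodule A K} : Y ≤ dual X ↔ Y * X ≤ 1 :=
  Submodule.le_div_iff_mul_le

lemma dual_mul_le_one (X : Submodule A K) : dual X * X ≤ 1 :=
  le_dual_iff.mp le_rfl

lemma dual_one : dual (1 : Submodule A K) = 1 :=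
  le_antisymm (by simpa using dual_mul_le_one (1 : Submodule A K))
    (le_dual_iff.mpr (one_mul _).le)

lemma vOp_le_one {X : Submodule A K} (h : X ≤ 1) : vOp X ≤ 1 :=
  (dual_antitone (le_dual_iff.mpr ((one_mul X).trans_le h))).trans dual_one.le

lemma dual_mul_dual_le (X Y : Submodule A K) : dual X * dual Y ≤ dual (X * Y) := by
  rw [le_dual_iff, mul_mul_mul_comm]
  simpa using mul_le_mul' (dual_mul_le_one X) (dual_mul_le_one Y)

lemma vOp_mul_le (X Y : Submodule A K) : vOp X * vOp Y ≤ vOp (X * Y) := by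
  rw [vOp_eq_dual_dual X, vOp_eq_dual_dual Y, vOp_eq_dual_dual (X * Y)]
  have h1 : dual (X * Y) * X ≤ dual Y := by
    rw [le_dual_iff, mul_assoc]; exact dual_mul_le_one _
  have h2 : dual (dual Y) * dual (X * Y) ≤ dual X := by
    rw [le_dual_iff, mul_assoc]
    exact (mul_le_mul' le_rfl h1).trans (dual_mul_le_one _)
  rw [le_dual_iff, mul_assoc]
  exact (mul_le_mul' le_rfl h2).trans (dual_mul_le_one _)

lemma vOp_pow_le (X : Submodule A K) (n : ℕ) : vOp X ^ n ≤ vOp (X ^ n) := by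
  induction n with
  | zero => simpa using le_vOp 1
  | succ n ih =>
    rw [pow_succ, pow_succ]
    exact (mul_le_mul' ih le_rfl).trans (vOp_mul_le _ _)

end StarOperations

section TOperation

variable {A : Type*} [CommRing A] {K : Type*} [Field K] [Algebra A K]

lemma vOp_le_tOp {X J : Submodule A K} (hJ : J ≠ ⊥) (hfg : J.FG) (hle : J ≤ X) :
    vOp J ≤ tOp X :=
  le_sSup ⟨J, hJ, hfg, hle, rfl⟩

lemma tOp_le {X Y : Submodule A K}
    (h : ∀ J : Submodule A K, J ≠ ⊥ → J.FG → J ≤ X → vOp J ≤ Y) : tOp X ≤ Y :=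
  sSup_le <| by rintro V ⟨J, hJ, hfg, hle, rfl⟩; exact h J hJ hfg hle

lemma le_tOp (X : Submodule A K) : X ≤ tOp X := by
  intro z hz
  rcases eq_or_ne z 0 with rfl | hz0
  · exact zero_mem _
  · exact vOp_le_tOp (by simpa using hz0) (Submodule.fg_span_singleton z)
      (by simpa using hz) (le_vOp _ (Submodule.mem_span_singleton_self z))

lemma tOp_mono {X Y : Submodule A K} (h : X ≤ Y) : tOp X ≤ tOp Y :=
  tOp_le fun _ hJ hfg hle => vOp_le_tOp hJ hfg (hle.trans h)

lemma tOp_le_vOp (X : Submodule A K) : tOp X ≤ vOp X :=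
  tOp_le fun _ _ _ hle => vOp_mono hle

lemma tOp_le_one {X : Submodule A K} (h : X ≤ 1) : tOp X ≤ 1 :=
  (tOp_le_vOp X).trans (vOp_le_one h)

lemma tOp_bot : tOp (⊥ : Submodule A K) = ⊥ :=
  le_bot_iff.mp (tOp_le fun _ hJ _ hle => absurd (le_bot_iff.mp hle) hJ)

lemma directedOn_vOp_fg (X : Submodule A K) :
    DirectedOn (· ≤ ·) {V | ∃ J : Submodule A K, J ≠ ⊥ ∧ J.FG ∧ J ≤ X ∧ V = vOp J} := by
  rintro _ ⟨J₁, hJ₁, hfg₁, hle₁, rfl⟩ _ ⟨J₂, -, hfg₂, hle₂, rfl⟩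
  exact ⟨vOp (J₁ ⊔ J₂), ⟨J₁ ⊔ J₂, fun h => hJ₁ (le_bot_iff.mp (h ▸ le_sup_left)),
    hfg₁.sup hfg₂, sup_le hle₁ hle₂, rfl⟩, vOp_mono le_sup_left, vOp_mono le_sup_right⟩

lemma exists_le_vOp_of_fg_le_tOp {X J : Submodule A K} (hJ : J ≠ ⊥) (hfg : J.FG)
    (h : J ≤ tOp X) : ∃ J' : Submodule A K, J' ≠ ⊥ ∧ J'.FG ∧ J' ≤ X ∧ J ≤ vOp J' := by
  have hX : X ≠ ⊥ := by rintro rfl; exact hJ (le_bot_iff.mp (tOp_bot (A := A) (K := K) ▸ h))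
  obtain ⟨x, hxX, hx0⟩ := Submodule.exists_mem_ne_zero_of_ne_bot hX
  have hc := (Submodule.fg_iff_compact J).mp hfg
  rw [CompleteLattice.isCompactElement_iff_le_of_directed_sSup_le] at hc
  obtain ⟨_, ⟨J', hJ', hfg', hle', rfl⟩, hJJ'⟩ := hc _
    (by exact ⟨_, Submodule.span A {x}, by simpa using hx0, Submodule.fg_span_singleton x,
      by simpa using hxX, rfl⟩) (directedOn_vOp_fg X) h
  exact ⟨J', hJ', hfg', hle', hJJ'⟩

lemma exists_fg_of_mem_tOp {X : Submodule A K} {z : K} (hz : z ∈ tOp X) (hz0 : z ≠ 0) :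
    ∃ J : Submodule A K, J ≠ ⊥ ∧ J.FG ∧ J ≤ X ∧ z ∈ vOp J := by
  obtain ⟨J, hJ, hfg, hle, hzJ⟩ := exists_le_vOp_of_fg_le_tOp (J := Submodule.span A {z})
    (by simpa using hz0) (Submodule.fg_span_singleton z) (by simpa using hz)
  exact ⟨J, hJ, hfg, hle, hzJ (Submodule.mem_span_singleton_self z)⟩

lemma tOp_idem (X : Submodule A K) : tOp (tOp X) = tOp X := by
  refine le_antisymm (tOp_le fun J hJ hfg hle => ?_) (le_tOp _)
  obtain ⟨J', hJ', hfg', hle', hJJ'⟩ := exists_le_vOp_of_fg_le_tOp hJ hfg hle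
  calc vOp J ≤ vOp (vOp J') := vOp_mono hJJ'
    _ = vOp J' := vOp_idem J'
    _ ≤ tOp X := vOp_le_tOp hJ' hfg' hle'

lemma tOp_mul_le (X Y : Submodule A K) : tOp X * tOp Y ≤ tOp (X * Y) := by
  refine Submodule.mul_le.mpr fun z hz w hw => ?_
  rcases eq_or_ne z 0 with rfl | hz0
  · simp
  rcases eq_or_ne w 0 with rfl | hw0
  · simp
  obtain ⟨J₁, hJ₁, hfg₁, hle₁, hzJ₁⟩ := exists_fg_of_mem_tOp hz hz0
  obtain ⟨J₂, hJ₂, hfg₂, hle₂, hwJ₂⟩ := exists_fg_of_mem_tOp hw hw0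
  refine vOp_le_tOp (by simp [Submodule.mul_eq_bot, hJ₁, hJ₂]) (hfg₁.mul hfg₂)
    (mul_le_mul' hle₁ hle₂) (vOp_mul_le J₁ J₂ (Submodule.mul_mem_mul hzJ₁ hwJ₂))

end TOperation

section ToK

variable {R : Type*} [CommRing R] {K : Type*} [Field K] [Algebra R K]

lemma toK_le_one (I : Ideal R) : toK R K I ≤ 1 := by
  rintro _ ⟨a, -, rfl⟩
  exact Submodule.mem_one.mpr ⟨a, rfl⟩

lemma toK_mul (I J : Ideal R) : toK R K (I * J) = toK R K I * toK R K J :=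
  Submodule.map_mul I J (Algebra.ofId R K)

lemma toK_pow (I : Ideal R) (n : ℕ) : toK R K (I ^ n) = toK R K I ^ n :=
  Submodule.map_pow I (Algebra.ofId R K) n

lemma toK_comap {X : Submodule R K} (h : X ≤ 1) :
    toK R K (X.comap (Algebra.linearMap R K)) = X := by
  refine le_antisymm (Submodule.map_comap_le _ _) fun z hz => ?_
  obtain ⟨a, rfl⟩ := Submodule.mem_one.mp (h hz)
  exact ⟨a, hz, rfl⟩

variable [IsFractionRing R K]

lemma algebraMap_mem_toK {I : Ideal R} {a : R} : algebraMap R K a ∈ toK R K I ↔ a ∈ I :=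
  ⟨fun ⟨_, hb, he⟩ => IsFractionRing.injective R K he ▸ hb, fun h => ⟨a, h, rfl⟩⟩

lemma toK_le_toK {I J : Ideal R} : toK R K I ≤ toK R K J ↔ I ≤ J :=
  Submodule.map_le_map_iff_of_injective (IsFractionRing.injective R K) I J

end ToK

section Denominators

variable {R : Type*} [CommRing R] {K : Type*} [Field K] [Algebra R K]

variable (R) in
/-- The ideal of denominators `(R :_R x) = {r ∈ R | x r ∈ R}`. -/
def denominatorIdeal (x : K) : Ideal R :=
  (1 : Submodule R K).comap (LinearMap.mulLeft R x ∘ₗ Algebra.linearMap R K)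

lemma mem_denominatorIdeal {x : K} {r : R} :
    r ∈ denominatorIdeal R x ↔ x * algebraMap R K r ∈ (1 : Submodule R K) :=
  Iff.rfl

lemma mem_denominatorIdeal_mul {x : K} {a b : R} :
    b ∈ denominatorIdeal R (x * algebraMap R K a) ↔ a * b ∈ denominatorIdeal R x := by
  simp only [mem_denominatorIdeal, map_mul, mul_assoc]

lemma le_denominatorIdeal_iff {I : Ideal R} {u : K} :
    I ≤ denominatorIdeal R u ↔ u ∈ dual (toK R K I) :=
  ⟨fun h _ ⟨_, ha, he⟩ => he ▸ h ha, fun h a ha => h _ ⟨a, ha, rfl⟩⟩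

lemma toK_denominatorIdeal (x : K) :
    toK R K (denominatorIdeal R x) = dual (Submodule.span R {1, x}) := by
  ext z
  simp only [mem_dual_span, Set.forall_mem_insert, Set.mem_singleton_iff, forall_eq, mul_one]
  constructor
  · rintro ⟨a, ha, rfl⟩
    exact ⟨Submodule.mem_one.mpr ⟨a, rfl⟩, by rw [mul_comm]; exact ha⟩
  · rintro ⟨hz, hzx⟩
    obtain ⟨a, rfl⟩ := Submodule.mem_one.mp hz
    exact ⟨a, by rw [mul_comm] at hzx; exact hzx, rfl⟩

lemma vOp_toK_denominatorIdeal (x : K) :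
    vOp (toK R K (denominatorIdeal R x)) = toK R K (denominatorIdeal R x) := by
  rw [toK_denominatorIdeal, vOp_dual]

lemma isTIdeal_denominatorIdeal (x : K) : IsTIdeal K (denominatorIdeal R x) :=
  le_antisymm ((tOp_le_vOp _).trans (vOp_toK_denominatorIdeal x).le) (le_tOp _)

lemma mem_loc_iff {P : Ideal R} {x : K} : x ∈ loc K P ↔ ¬ denominatorIdeal R x ≤ P := by
  simp only [SetLike.not_le_iff_exists, mem_denominatorIdeal, Submodule.mem_one, loc,
    Set.mem_ofPred_eq]
  exact ⟨fun ⟨a, s, hs, h⟩ => ⟨s, ⟨a, h.symm⟩, hs⟩, fun ⟨s, ⟨a, h⟩, hs⟩ => ⟨a, s, hs, h.symm⟩⟩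

lemma mem_kaplansky_iff {P : Ideal R} {x : K} :
    x ∈ kaplansky K P ↔ P ≤ (denominatorIdeal R x).radical := by
  refine ⟨fun h p hp => ?_, fun h p hp => ?_⟩
  · obtain ⟨n, -, r, hr⟩ := h p hp
    exact ⟨n, mem_denominatorIdeal.mpr (Submodule.mem_one.mpr ⟨r, by rw [map_pow, hr]⟩)⟩
  · obtain ⟨n, hn⟩ := h hp
    obtain ⟨r, hr⟩ := Submodule.mem_one.mp
      (mem_denominatorIdeal.mp ((denominatorIdeal R x).mul_mem_left p hn))
    exact ⟨n + 1, n.succ_pos, r, by rw [hr, ← pow_succ', map_pow]⟩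

lemma mem_nagata_iff {P : Ideal R} {x : K} :
    x ∈ nagata K P ↔ ∃ n, P ^ (n + 1) ≤ denominatorIdeal R x := by
  simp only [SetLike.le_def, mem_denominatorIdeal, Submodule.mem_one]
  exact exists_congr fun _ => forall₂_congr fun _ _ => exists_congr fun _ => eq_comm

lemma nagata_le_kaplansky (P : Ideal R) : nagata K P ≤ kaplansky K P := by
  intro x hx
  obtain ⟨n, hn⟩ := mem_nagata_iff.mp hx
  exact mem_kaplansky_iff.mpr fun p hp => ⟨n + 1, hn (Ideal.pow_mem_pow hp _)⟩

lemma mem_kaplansky_of_forall_mul_mem {P : Ideal R} {F : Submodule R K} (hF : F.FG)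
    (h1 : (1 : K) ∈ vOp F) {z : K} (hz : ∀ f ∈ F, z * f ∈ kaplansky K P) :
    z ∈ kaplansky K P := by
  obtain ⟨s, rfl⟩ := hF
  have hD : s.inf (fun f => denominatorIdeal R (z * f)) ≤ denominatorIdeal R z := fun r hr => by
    refine one_mem_vOp_iff.mp h1 (mem_dual_span.mpr fun f hf => ?_)
    have hrf := mem_denominatorIdeal.mp
      (Finset.inf_le (f := fun f => denominatorIdeal R (z * f)) hf hr)
    rwa [mul_right_comm] at hrf
  refine mem_kaplansky_iff.mpr (le_trans ?_ (Ideal.radical_mono hD))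
  rw [← Ideal.radicalInfTopHom_apply, map_finset_inf]
  exact Finset.le_inf fun f hf => mem_kaplansky_iff.mp (hz f (Submodule.subset_span hf))

lemma mem_kaplansky_of_mem_dual {P I : Ideal R} (hPI : P ≤ I.radical) {u : K}
    (hu : u ∈ dual (toK R K I)) : u ∈ kaplansky K P :=
  mem_kaplansky_iff.mpr (hPI.trans (Ideal.radical_mono (le_denominatorIdeal_iff.mpr hu)))

end Denominators

section TInvertible

variable {A : Type*} [CommRing A] {K : Type*} [Field K] [Algebra A K]

lemma dual_span_singleton_mul {c : K} (hc : c ≠ 0) (X : Submodule A K) :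
    dual (Submodule.span A {c} * X) = Submodule.span A {c⁻¹} * dual X := by
  refine le_antisymm (fun z hz => ?_) ?_
  · rw [Submodule.mem_span_singleton_mul]
    refine ⟨c * z, fun y hy => ?_, by field_simp⟩
    rw [show c * z * y = z * (c * y) by ring]
    exact hz _ (Submodule.mem_span_singleton_mul.mpr ⟨y, hy, rfl⟩)
  · rw [le_dual_iff, mul_mul_mul_comm, Submodule.span_mul_span, Set.singleton_mul_singleton,
      inv_mul_cancel₀ hc, ← Submodule.one_eq_span, one_mul]
    exact dual_mul_le_one X

lemma span_singleton_mul_mul_dual {c : K} (hc : c ≠ 0) (X : Submodule A K) :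
    Submodule.span A {c} * X * dual (Submodule.span A {c} * X) = X * dual X := by
  rw [dual_span_singleton_mul hc, mul_mul_mul_comm, Submodule.span_mul_span,
    Set.singleton_mul_singleton, mul_inv_cancel₀ hc, ← Submodule.one_eq_span, one_mul]

lemma tOp_dual_mul_dual_dual {X : Submodule A K} (h : tOp (X * dual X) = 1) :
    tOp (dual X * dual (dual X)) = 1 :=
  le_antisymm (tOp_le_one (by rw [mul_comm]; exact dual_mul_le_one (dual X)))
    (h ▸ tOp_mono (by rw [mul_comm]; exact mul_le_mul' le_rfl (le_vOp X)))

end TInvertible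

section Compactness

lemma GaloisConnection.exists_le_of_le_l_sSup {α L : Type*} [CompleteLattice α]
    [CompleteLattice L] {f : α → L} {g : L → α} (gc : GaloisConnection f g) {k : L}
    (hk : IsCompactElement k) {c : Set α} (hne : c.Nonempty) (hc : DirectedOn (· ≤ ·) c)
    (h : k ≤ f (sSup c)) : ∃ a ∈ c, k ≤ f a := by
  rw [gc.l_sSup, ← sSup_image] at h
  obtain ⟨_, ⟨a, ha, rfl⟩, hka⟩ :=
    (CompleteLattice.isCompactElement_iff_le_of_directed_sSup_le L k).mp hk _ (hne.image f)
      (hc.mono_comp fun _ _ hxy => gc.monotone_l hxy) h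
  exact ⟨a, ha, hka⟩

lemma GaloisConnection.exists_fg_le {R L : Type*} [CommRing R] [CompleteLattice L]
    {f : Ideal R → L} {g : L → Ideal R} (gc : GaloisConnection f g) {k : L}
    (hk : IsCompactElement k) {I : Ideal R} (h : k ≤ f I) : ∃ J ≤ I, J.FG ∧ k ≤ f J := by
  set c := {J : Ideal R | J ≤ I ∧ J.FG}
  have hI : sSup c = I :=
    le_antisymm (sSup_le fun _ hJ => hJ.1) fun a ha => Submodule.mem_sSup_of_mem
      (show Ideal.span {a} ∈ c from
        ⟨(Ideal.span_singleton_le_iff_mem I).mpr ha, Submodule.fg_span_singleton a⟩)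
      (Ideal.mem_span_singleton_self a)
  obtain ⟨J, ⟨hJI, hfg⟩, hkJ⟩ := GaloisConnection.exists_le_of_le_l_sSup gc hk
    (show c.Nonempty from ⟨⊥, bot_le, Submodule.fg_bot⟩)
    (fun J₁ h₁ J₂ h₂ => ⟨J₁ ⊔ J₂, ⟨sup_le h₁.1 h₂.1, Submodule.FG.sup h₁.2 h₂.2⟩,
      le_sup_left, le_sup_right⟩)
    (hI.symm ▸ h)
  exact ⟨J, hJI, hfg, hkJ⟩

end Compactness

section TMaximal

variable {R : Type*} [CommRing R] {K : Type*} [Field K] [Algebra R K]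

variable (K) in
def tClosure (I : Ideal R) : Ideal R :=
  (tOp (toK R K I)).comap (Algebra.linearMap R K)

lemma toK_tClosure (I : Ideal R) : toK R K (tClosure K I) = tOp (toK R K I) :=
  toK_comap (tOp_le_one (toK_le_one I))

lemma isTIdeal_tClosure (I : Ideal R) : IsTIdeal K (tClosure K I) := by
  rw [IsTIdeal, toK_tClosure, tOp_idem]

lemma isTIdeal_sSup {c : Set (Ideal R)} (hc : IsChain (· ≤ ·) c) (hne : c.Nonempty)
    (ht : ∀ I ∈ c, IsTIdeal K I) : IsTIdeal K (sSup c) := by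
  refine le_antisymm (tOp_le fun J hJ hfg hle => ?_) (le_tOp _)
  obtain ⟨I, hI, hJI⟩ := GaloisConnection.exists_le_of_le_l_sSup
    (Submodule.gc_map_comap (Algebra.linearMap R K)) ((Submodule.fg_iff_compact J).mp hfg)
    hne hc.directedOn hle
  calc vOp J ≤ tOp (toK R K I) := vOp_le_tOp hJ hfg hJI
    _ = toK R K I := ht I hI
    _ ≤ toK R K (sSup c) := Submodule.map_mono (le_sSup hI)

lemma exists_isTMaximal_le {I : Ideal R} (hI : IsTIdeal K I) (hI' : I ≠ ⊤) :
    ∃ M, IsTMaximal K M ∧ I ≤ M := by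
  have hchain : ∀ c ⊆ {J : Ideal R | IsTIdeal K J ∧ J ≠ ⊤}, IsChain (· ≤ ·) c → ∀ J ∈ c,
      ∃ U ∈ {J : Ideal R | IsTIdeal K J ∧ J ≠ ⊤}, ∀ J' ∈ c, J' ≤ U := by
    intro c hcS hc J hJ
    refine ⟨sSup c, ⟨isTIdeal_sSup hc ⟨J, hJ⟩ fun I hI => (hcS hI).1, ?_⟩, fun _ => le_sSup⟩
    rw [Ne, Ideal.eq_top_iff_one, Submodule.mem_sSup_of_directed ⟨J, hJ⟩ hc.directedOn]
    rintro ⟨I, hI, h1⟩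
    exact (hcS hI).2 ((Ideal.eq_top_iff_one I).mpr h1)
  obtain ⟨M, hIM, hmax⟩ := zorn_le_nonempty₀ _ hchain I ⟨hI, hI'⟩
  exact ⟨M, ⟨hmax.prop.2, hmax.prop.1, fun J hJ hJt hMJ =>
    le_antisymm (hmax.2 ⟨hJt, hJ⟩ hMJ) hMJ⟩, hIM⟩

variable [IsFractionRing R K]

lemma le_tClosure (I : Ideal R) : I ≤ tClosure K I :=
  fun _ ha => le_tOp _ (algebraMap_mem_toK.mpr ha)

lemma IsTMaximal.one_mem_tOp_sup {M : Ideal R} (hM : IsTMaximal K M) {c : R} (hc : c ∉ M) :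
    (1 : K) ∈ tOp (toK R K (M ⊔ Ideal.span {c})) := by
  by_contra h1
  have hne : tClosure K (M ⊔ Ideal.span {c}) ≠ ⊤ := by
    rw [Ne, Ideal.eq_top_iff_one]
    intro h
    exact h1 (by simpa using (h : algebraMap R K 1 ∈ _))
  have heq := hM.2.2 _ hne (isTIdeal_tClosure _) (le_sup_left.trans (le_tClosure _))
  exact hc (heq ▸ le_tClosure _ (Ideal.mem_sup_right (Ideal.mem_span_singleton_self c)))

lemma IsTMaximal.isPrime {M : Ideal R} (hM : IsTMaximal K M) : M.IsPrime := by
  refine ⟨hM.1, fun {a b} hab => ?_⟩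
  by_contra! h
  have hprod : (M ⊔ Ideal.span {a}) * (M ⊔ Ideal.span {b}) ≤ M := by
    rw [Ideal.sup_mul, Ideal.mul_sup, Ideal.mul_sup, Ideal.span_singleton_mul_span_singleton]
    exact sup_le (sup_le Ideal.mul_le_left Ideal.mul_le_left)
      (sup_le Ideal.mul_le_right ((Ideal.span_singleton_le_iff_mem M).mpr hab))
  have h1 : (1 : K) ∈ toK R K M := by
    rw [← hM.2.1]
    refine tOp_mono (toK_le_toK.mpr hprod) ?_
    rw [toK_mul, ← mul_one (1 : K)]
    exact tOp_mul_le _ _ (Submodule.mul_mem_mul (hM.one_mem_tOp_sup h.1)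
      (hM.one_mem_tOp_sup h.2))
  exact hM.1 ((Ideal.eq_top_iff_one M).mpr ((algebraMap_mem_toK (K := K)).mp (by simpa using h1)))

end TMaximal

section PVMD

variable {R : Type*} [CommRing R] {K : Type*} [Field K] [Algebra R K]

lemma IsTInvertible.exists_fg_le_mul_dual {I : Ideal R} (hI : IsTInvertible K I) :
    ∃ F : Submodule R K, F ≠ ⊥ ∧ F.FG ∧ F ≤ toK R K I * dual (toK R K I) ∧ (1 : K) ∈ vOp F :=
  exists_fg_of_mem_tOp (by rw [hI]; exact Submodule.one_le.mp le_rfl) one_ne_zero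

lemma IsTInvertible.exists_fg_le_vOp {I : Ideal R} (hI : IsTInvertible K I) :
    ∃ J ≤ I, J.FG ∧ toK R K I ≤ vOp (toK R K J) := by
  obtain ⟨F, -, hfg, hF, h1⟩ := hI.exists_fg_le_mul_dual
  obtain ⟨J, hJI, hJ, hFJ⟩ := GaloisConnection.exists_fg_le
    (f := fun J => toK R K J * dual (toK R K I))
    (fun _ _ => Submodule.le_div_iff_mul_le.symm.trans Submodule.map_le_iff_le_comap)
    ((Submodule.fg_iff_compact F).mp hfg) hF
  refine ⟨J, hJI, hJ, fun c hc y hy => ?_⟩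
  have hcy : c * y ∈ dual F := dual_antitone hFJ <| dual_mul_dual_le _ _ <| by
    rw [mul_comm c y]; exact Submodule.mul_mem_mul hy (le_vOp _ hc)
  simpa using one_mem_vOp_iff.mp h1 hcy

variable [IsFractionRing R K]

lemma isTInvertible_denominatorIdeal (hR : IsPVMD R K) (x : K) :
    IsTInvertible K (denominatorIdeal R x) := by
  have := (algebraMap R K).domain_nontrivial
  obtain ⟨⟨a, b⟩, hab⟩ := IsLocalization.surj (nonZeroDivisors R) x
  have hb : algebraMap R K b ≠ 0 := IsFractionRing.to_map_ne_zero_of_mem_nonZeroDivisors b.2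
  have hspan : Submodule.span R {1, x} =
      Submodule.span R {(algebraMap R K b)⁻¹} * toK R K (Ideal.span {(b : R), a}) := by
    rw [toK, Ideal.span, Submodule.map_span, Submodule.span_mul_span, Set.image_pair,
      Set.singleton_mul, Set.image_pair]
    simp only [Algebra.linearMap_apply, inv_mul_cancel₀ hb]
    rw [← hab]
    field_simp
  have hJ : Ideal.span {(b : R), a} ≠ ⊥ := fun h => hb <| by
    simpa using (Ideal.span_eq_bot.mp h) b (by simp)
  unfold IsTInvertible
  rw [toK_denominatorIdeal]
  refine tOp_dual_mul_dual_dual ?_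
  rw [hspan, span_singleton_mul_mul_dual (inv_ne_zero hb)]
  exact hR _ hJ ⟨{(b : R), a}, by simp⟩

lemma IsTInvertible.exists_mul_eq_notMem {I Q : Ideal R} (hI : IsTInvertible K I)
    (hQ : IsTIdeal K Q) (hQ' : Q ≠ ⊤) :
    ∃ a ∈ I, ∃ u ∈ dual (toK R K I), ∃ t ∉ Q, u * algebraMap R K a = algebraMap R K t := by
  by_contra! h
  have hle : toK R K I * dual (toK R K I) ≤ toK R K Q := by
    refine Submodule.mul_le.mpr ?_
    rintro _ ⟨a, ha, rfl⟩ u hu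
    obtain ⟨t, ht⟩ := Submodule.mem_one.mp (hu _ ⟨a, ha, rfl⟩)
    rw [Algebra.linearMap_apply] at ht ⊢
    rw [mul_comm, ← ht]
    exact algebraMap_mem_toK.mpr (not_not.mp fun htQ => h a ha u hu t htQ ht.symm)
  have h1 : (1 : Submodule R K) ≤ toK R K Q := hI ▸ hQ ▸ tOp_mono hle
  exact hQ' ((Ideal.eq_top_iff_one Q).mpr
    ((algebraMap_mem_toK (K := K)).mp (by simpa using Submodule.one_le.mp h1)))

lemma IsPVMD.exists_mul_eq_mul (hR : IsPVMD R K) (s p : R) {M : Ideal R} (hM : IsTIdeal K M)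
    (hM' : M ≠ ⊤) : ∃ q₁ q₂ : R, s * q₂ = p * q₁ ∧ (q₁ ∉ M ∨ q₂ ∉ M) := by
  rcases eq_or_ne (Ideal.span {s, p}) ⊥ with h | h
  · have h0 := Ideal.span_eq_bot.mp h
    exact ⟨1, 1, by simp [h0 s (by simp), h0 p (by simp)],
      Or.inl fun h1 => hM' ((Ideal.eq_top_iff_one M).mpr h1)⟩
  obtain ⟨a, ha, w, hw, t, htM, hwa⟩ :=
    (hR _ h ⟨{s, p}, by simp⟩).exists_mul_eq_notMem hM hM'
  obtain ⟨q₁, hq₁⟩ := Submodule.mem_one.mp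
    (hw _ (algebraMap_mem_toK.mpr (Ideal.subset_span (by simp) : s ∈ Ideal.span {s, p})))
  obtain ⟨q₂, hq₂⟩ := Submodule.mem_one.mp
    (hw _ (algebraMap_mem_toK.mpr (Ideal.subset_span (by simp) : p ∈ Ideal.span {s, p})))
  obtain ⟨α, β, rfl⟩ := Ideal.mem_span_pair.mp ha
  refine ⟨q₁, q₂, IsFractionRing.injective R K ?_, ?_⟩
  · rw [map_mul, map_mul, hq₁, hq₂]; ring
  · by_contra! hq
    have ht : t = α * q₁ + β * q₂ := IsFractionRing.injective R K <| by
      rw [← hwa, map_add, map_add, map_mul, map_mul, map_mul, map_mul, hq₁, hq₂]; ring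
    exact htM (ht ▸ add_mem (M.mul_mem_left α hq.1) (M.mul_mem_left β hq.2))

lemma exists_pow_le_of_le_vOp {C D J : Ideal R} (hJ : J.FG) (hCJ : toK R K C ≤ vOp (toK R K J))
    (hJD : J ≤ D.radical) (hD : vOp (toK R K D) = toK R K D) : ∃ N, C ^ N ≤ D := by
  obtain ⟨N, hN⟩ := Ideal.exists_pow_le_of_le_radical_of_fg hJD hJ
  refine ⟨N, (toK_le_toK (K := K)).mp ?_⟩
  calc toK R K (C ^ N) = toK R K C ^ N := toK_pow C N
    _ ≤ vOp (toK R K J) ^ N := pow_le_pow_left' hCJ N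
    _ ≤ vOp (toK R K J ^ N) := vOp_pow_le _ N
    _ = vOp (toK R K (J ^ N)) := by rw [toK_pow]
    _ ≤ vOp (toK R K D) := vOp_mono (toK_le_toK.mpr hN)
    _ = toK R K D := hD

end PVMD

section Transforms

variable {R : Type*} [CommRing R] {K : Type*} [Field K] [Algebra R K]

lemma mem_one_iff_mem_subalgebra {T : Subalgebra R K} {z : K} :
    z ∈ (1 : Submodule T K) ↔ z ∈ T :=
  ⟨fun h => let ⟨w, hw⟩ := Submodule.mem_one.mp h; hw ▸ w.2,
    fun h => Submodule.mem_one.mpr ⟨⟨z, h⟩, rfl⟩⟩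

lemma extendI_le_one (I : Ideal R) (T : Subalgebra R K) : extendI I T ≤ 1 :=
  Submodule.span_le.mpr <| by
    rintro _ ⟨a, -, rfl⟩
    exact mem_one_iff_mem_subalgebra.mpr (T.algebraMap_mem a)

variable [IsFractionRing R K] {P : Ideal R}

theorem le_denominatorIdeal_of_mem_loc_of_mem_kaplansky (hR : IsPVMD R K) (hP : P.IsPrime)
    {x : K} (hl : x ∈ loc K P) (hk : x ∈ kaplansky K P) : P ≤ denominatorIdeal R x := by
  obtain ⟨s, hs, hsP⟩ := SetLike.not_le_iff_exists.mp (mem_loc_iff.mp hl)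
  intro p hp
  have htop : denominatorIdeal R (x * algebraMap R K p) = ⊤ := by
    by_contra hne
    obtain ⟨M, hM, hle⟩ := exists_isTMaximal_le (isTIdeal_denominatorIdeal _) hne
    -- `s q₂ = p q₁`: if `q₁ ∉ M` then `p / s ∈ R_M`, otherwise `q₂ ∈ P ∖ M` and a power of
    -- `q₂` clears the denominator of `x`
    obtain ⟨q₁, q₂, hq, hq₁ | hq₂⟩ := hR.exists_mul_eq_mul s p hM.2.1 hM.1
    · refine hq₁ (hle (mem_denominatorIdeal_mul.mpr ?_))
      rw [← hq]
      exact Ideal.mul_mem_right q₂ _ hs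
    · have hq₂P : q₂ ∈ P :=
        (hP.mem_or_mem (hq ▸ P.mul_mem_right q₁ hp)).resolve_left hsP
      obtain ⟨n, hn⟩ := mem_kaplansky_iff.mp hk hq₂P
      exact hq₂ (hM.isPrime.mem_of_pow_mem n
        (hle (mem_denominatorIdeal_mul.mpr (Ideal.mul_mem_left _ p hn))))
  simpa using mem_denominatorIdeal_mul.mp ((Ideal.eq_top_iff_one _).mp htop)

theorem loc_inter_kaplansky_subset_nagata (hR : IsPVMD R K) (hP : P.IsPrime) :
    loc K P ∩ (kaplansky K P : Set K) ⊆ nagata K P := fun _ ⟨hl, hk⟩ =>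
  mem_nagata_iff.mpr ⟨0, by simpa using le_denominatorIdeal_of_mem_loc_of_mem_kaplansky hR hP hl hk⟩

theorem kaplansky_subset_nagata_of_notMem_loc (hR : IsPVMD R K) {u : K}
    (hu : u ∈ nagata K P) (hul : u ∉ loc K P) : (kaplansky K P : Set K) ⊆ nagata K P := by
  obtain ⟨n, hn⟩ := mem_nagata_iff.mp hu
  have huP : denominatorIdeal R u ≤ P := not_not.mp (mem_loc_iff.not.mp hul)
  obtain ⟨J, hJu, hJ, huJ⟩ := (isTInvertible_denominatorIdeal hR u).exists_fg_le_vOp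
  intro w hw
  obtain ⟨N, hN⟩ := exists_pow_le_of_le_vOp hJ huJ
    ((hJu.trans huP).trans (mem_kaplansky_iff.mp hw)) (vOp_toK_denominatorIdeal w)
  refine mem_nagata_iff.mpr ⟨(n + 1) * N, ?_⟩
  calc P ^ ((n + 1) * N + 1) ≤ P ^ ((n + 1) * N) := Ideal.pow_le_pow_right (Nat.le_succ _)
    _ = (P ^ (n + 1)) ^ N := pow_mul _ _ _
    _ ≤ denominatorIdeal R u ^ N := Ideal.pow_right_mono hn N
    _ ≤ denominatorIdeal R w := hN

theorem nagata_ssubset_kaplansky_iff (hR : IsPVMD R K) (hP : P.IsPrime) :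
    (nagata K P : Set K) ⊂ kaplansky K P ↔
      (nagata K P : Set K) = loc K P ∩ kaplansky K P ∧ ¬ (kaplansky K P : Set K) ⊆ loc K P := by
  have hTΩ : (nagata K P : Set K) ⊆ kaplansky K P := nagata_le_kaplansky P
  have hA := loc_inter_kaplansky_subset_nagata hR hP
  constructor
  · intro hss
    refine ⟨subset_antisymm (fun u hu => ⟨?_, hTΩ hu⟩) hA,
      fun h => hss.not_subset fun x hx => hA ⟨h hx, hx⟩⟩
    by_contra hul
    exact hss.not_subset (kaplansky_subset_nagata_of_notMem_loc hR hu hul)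
  · rintro ⟨heq, hΩ⟩
    exact hTΩ.ssubset_of_not_subset fun h => hΩ fun x hx => (heq ▸ h hx).1

theorem exists_isTInvertible_radical_eq (hR : IsPVMD R K) (hP : P.IsPrime)
    (h : ¬ (kaplansky K P : Set K) ⊆ loc K P) : ∃ I, IsTInvertible K I ∧ I.radical = P := by
  obtain ⟨x, hx, hxl⟩ := Set.not_subset.mp h
  refine ⟨denominatorIdeal R x, isTInvertible_denominatorIdeal hR x,
    le_antisymm ?_ (mem_kaplansky_iff.mp hx)⟩
  exact (Ideal.radical_mono (not_not.mp (mem_loc_iff.not.mp hxl))).trans hP.radical.le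

theorem not_kaplansky_subset_loc (hP : P.IsPrime) (htP : IsTIdeal K P) {I : Ideal R}
    (hI : IsTInvertible K I) (hIP : I ≤ P) (hdual : ∀ u ∈ dual (toK R K I), u ∈ kaplansky K P) :
    ¬ (kaplansky K P : Set K) ⊆ loc K P := by
  obtain ⟨a, ha, u, hu, t, htP', hut⟩ := hI.exists_mul_eq_notMem htP hP.ne_top
  intro hsub
  obtain ⟨s, hs, hsP⟩ := SetLike.not_le_iff_exists.mp (mem_loc_iff.mp (hsub (hdual u hu)))
  obtain ⟨c, hc⟩ := Submodule.mem_one.mp (mem_denominatorIdeal.mp hs)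
  have hts : t * s = c * a :=
    IsFractionRing.injective R K (by rw [map_mul, map_mul, ← hut, hc]; ring)
  rcases hP.mem_or_mem (hts ▸ P.mul_mem_left c (hIP ha)) with h | h
  exacts [htP' h, hsP h]

theorem not_kaplansky_subset_loc_of_radical_eq (hP : P.IsPrime) (htP : IsTIdeal K P)
    {I : Ideal R} (hI : IsTInvertible K I) (hrad : I.radical = P) :
    ¬ (kaplansky K P : Set K) ⊆ loc K P :=
  not_kaplansky_subset_loc hP htP hI (hrad ▸ Ideal.le_radical) fun _ =>
    mem_kaplansky_of_mem_dual hrad.ge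

theorem tOp_extendI_kaplansky_eq_one (hR : IsPVMD R K) (hP : P.IsPrime)
    (h : ¬ (kaplansky K P : Set K) ⊆ loc K P) : tOp (extendI P (kaplansky K P)) = 1 := by
  obtain ⟨I, hI, hrad⟩ := exists_isTInvertible_radical_eq hR hP h
  obtain ⟨F, hF0, hfg, hF, h1⟩ := hI.exists_fg_le_mul_dual
  have hFP : (F : Set K) ⊆ extendI P (kaplansky K P) := fun f hf => by
    refine Submodule.mul_induction_on (hF hf) ?_ fun _ _ => add_mem
    rintro _ ⟨a, ha, rfl⟩ u hu
    rw [mul_comm]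
    exact Submodule.smul_mem _ (⟨u, mem_kaplansky_of_mem_dual hrad.ge hu⟩ : kaplansky K P)
      (Submodule.subset_span ⟨a, hrad ▸ Ideal.le_radical ha, rfl⟩)
  refine le_antisymm (tOp_le_one (extendI_le_one P _)) (Submodule.one_le.mpr ?_)
  refine vOp_le_tOp ?_ ?_ (Submodule.span_le.mpr hFP) (one_mem_vOp_iff.mpr fun z hz =>
    mem_one_iff_mem_subalgebra.mpr (mem_kaplansky_of_forall_mul_mem hfg h1 fun f hf =>
      mem_one_iff_mem_subalgebra.mp (hz f (Submodule.subset_span hf))))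
  · intro h0
    refine hF0 (eq_bot_iff.mpr fun f hf => ?_)
    have hf' : f ∈ Submodule.span (kaplansky K P) (F : Set K) := Submodule.subset_span hf
    simpa [h0] using hf'
  · obtain ⟨s, rfl⟩ := hfg
    exact ⟨s, (Submodule.span_span_of_tower R (kaplansky K P) (s : Set K)).symm⟩

theorem not_kaplansky_subset_loc_of_tOp_extendI_eq_one (hR : IsPVMD R K) (hP : P.IsPrime)
    (htP : IsTIdeal K P) (h : tOp (extendI P (kaplansky K P)) = 1) :
    ¬ (kaplansky K P : Set K) ⊆ loc K P := by
  obtain ⟨W, hW0, hfg, hW, h1⟩ := exists_fg_of_mem_tOp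
    (by rw [h]; exact Submodule.one_le.mp le_rfl) (one_ne_zero (α := K))
  obtain ⟨Q, hQP, hQ, hWQ⟩ := GaloisConnection.exists_fg_le
    (f := fun J => extendI J (kaplansky K P))
    (g := fun Z => (Z.restrictScalars R).comap (Algebra.linearMap R K))
    (fun _ _ => Submodule.span_le.trans Set.image_subset_iff)
    ((Submodule.fg_iff_compact W).mp hfg) hW
  have hQ0 : Q ≠ ⊥ := by
    rintro rfl
    exact hW0 (le_bot_iff.mp (hWQ.trans (by simp [extendI])))
  refine not_kaplansky_subset_loc hP htP (hR Q hQ0 hQ) hQP fun u hu => ?_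
  have huW : u ∈ dual W := dual_antitone hWQ <| mem_dual_span.mpr <| by
    rintro _ ⟨a, ha, rfl⟩
    obtain ⟨c, hc⟩ := Submodule.mem_one.mp (hu _ ⟨a, ha, rfl⟩)
    exact mem_one_iff_mem_subalgebra.mpr (hc ▸ (kaplansky K P).algebraMap_mem c)
  simpa using mem_one_iff_mem_subalgebra.mp (one_mem_vOp_iff.mp h1 huW)

end Transforms

section Statements

variable {R : Type*} [CommRing R] [IsDomain R]
variable {K : Type*} [Field K] [Algebra R K] [IsFractionRing R K]

theorem statement_17_general (hR : IsPVMD R K) (P : Ideal R) (hP : P.IsPrime)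
    (htP : IsTIdeal K P) :
    ((nagata K P : Set K) ⊂ (kaplansky K P : Set K) ↔
        (nagata K P : Set K) = loc K P ∩ (kaplansky K P : Set K) ∧
          ¬ (kaplansky K P : Set K) ⊆ loc K P) ∧
      (tOp (extendI P (kaplansky K P)) = 1 ↔ ¬ (kaplansky K P : Set K) ⊆ loc K P) ∧
      (¬ (kaplansky K P : Set K) ⊆ loc K P ↔
        ∃ I : Ideal R, IsTInvertible K I ∧ I.radical = P) :=
  ⟨nagata_ssubset_kaplansky_iff hR hP,
    ⟨not_kaplansky_subset_loc_of_tOp_extendI_eq_one hR hP htP, tOp_extendI_kaplansky_eq_one hR hP⟩,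
    ⟨exists_isTInvertible_radical_eq hR hP, fun ⟨_, hI, hrad⟩ =>
      not_kaplansky_subset_loc_of_radical_eq hP htP hI hrad⟩⟩

/-- Let `R` be a PVMD and `P` a `t`-prime ideal of `R`. Then:
(1) `T(P) ⊊ Ω(P)` iff `T(P) = R_P ∩ Ω(P)` and `Ω(P) ⊄ R_P`; (2) the following are
equivalent: `(P·Ω(P))_{t₁} = Ω(P)`; `Ω(P) ⊄ R_P`; `P = √I` for some `t`-invertible
ideal `I` of `R`. -/
theorem statement_17 (hR : IsPVMD R K) (P : Ideal R) (hbot : P ≠ ⊥) (hP : P.IsPrime)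
    (htP : IsTIdeal K P) :
    ((nagata K P : Set K) ⊂ (kaplansky K P : Set K) ↔
        (nagata K P : Set K) = loc K P ∩ (kaplansky K P : Set K) ∧
          ¬ (kaplansky K P : Set K) ⊆ loc K P) ∧
      (tOp (extendI P (kaplansky K P)) = 1 ↔ ¬ (kaplansky K P : Set K) ⊆ loc K P) ∧
      (¬ (kaplansky K P : Set K) ⊆ loc K P ↔
        ∃ I : Ideal R, IsTInvertible K I ∧ I.radical = P) :=
  statement_17_general hR P hP htP

end Statements

end

end PVMDPaper
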